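/- Fix integers m, n, r with 1 ≤ r ≤ min(m,n). Let v₁ ≥ v₂ ≥ ⋯ ≥ v_r > 0 and let V be the m×n real matrix with V_{ii} = vᵢ for 1 ≤ i ≤ r and all other entries 0. Let U ∈ ℝ^{m×n} satisfy U_{ij} = V_{ij} whenever i ≤ r or j ≤ r, and suppose the lower-right (m−r)×(n−r) block U₂₂ = (U_{ij})_{i>r,j>r} has spectral norm at most v_r. Then V is also a nearest point to U on the rank variety with respect to the spectral norm: for every matrix B ∈ ℝ^{m×n} with rank B ≤ r, ‖U − V‖₂ ≤ ‖U − B‖₂. -/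

import Mathlib

/-- The spectral norm of a real matrix: its operator norm as a linear map between
Euclidean spaces (= largest singular value). -/
noncomputable def specNorm {m n : ℕ} (A : Matrix (Fin m) (Fin n) ℝ) : ℝ :=
  ‖LinearMap.toContinuousLinearMap (Matrix.toEuclideanLin A)‖

open Finset

lemma vcls_sum_split {M : Type*} [AddCommMonoid M] (k r : ℕ) (h : r ≤ k) (f : Fin k → M) :
    ∑ i, f i = (∑ i : Fin r, f ⟨i, by omega⟩) + ∑ i : Fin (k - r), f ⟨r + i, by omega⟩ := by
  let e : (Fin r ⊕ Fin (k - r)) ≃ Fin k :=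
    (finSumFinEquiv (m := r) (n := k - r)).trans (finCongr (by omega))
  rw [← Fintype.sum_equiv e (fun s => f (e s)) f (fun s => rfl), Fintype.sum_sum_type]
  congr 1

lemma vcls_sq_norm {k : ℕ} (x : EuclideanSpace ℝ (Fin k)) : ‖x‖^2 = ∑ i, (x i)^2 := by
  rw [EuclideanSpace.norm_eq, Real.sq_sqrt (by positivity)]
  simp [sq_abs]

lemma vcls_le_of_sq_le {a b : ℝ} (hb : 0 ≤ b) (h : a^2 ≤ b^2) : a ≤ b := by nlinarith

lemma vcls_apply_le {m n : ℕ} (A : Matrix (Fin m) (Fin n) ℝ) (x : EuclideanSpace ℝ (Fin n)) :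
    ‖Matrix.toEuclideanLin A x‖ ≤ specNorm A * ‖x‖ := by
  simpa [specNorm] using (LinearMap.toContinuousLinearMap (Matrix.toEuclideanLin A)).le_opNorm x

lemma vcls_specNorm_le {m n : ℕ} (A : Matrix (Fin m) (Fin n) ℝ) (c : ℝ) (hc : 0 ≤ c)
    (h : ∀ x, ‖Matrix.toEuclideanLin A x‖ ≤ c * ‖x‖) : specNorm A ≤ c :=
  ContinuousLinearMap.opNorm_le_bound _ hc (by simpa using h)

lemma vcls_specNorm_nonneg {m n : ℕ} (A : Matrix (Fin m) (Fin n) ℝ) : 0 ≤ specNorm A :=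
  norm_nonneg _

lemma vcls_exists_max {m n : ℕ} (hn : 1 ≤ n) (A : Matrix (Fin m) (Fin n) ℝ) :
    ∃ w : EuclideanSpace ℝ (Fin n), ‖w‖ = 1 ∧ ‖Matrix.toEuclideanLin A w‖ = specNorm A := by
  set T := LinearMap.toContinuousLinearMap (Matrix.toEuclideanLin A)
  have hne : (Metric.sphere (0 : EuclideanSpace ℝ (Fin n)) 1).Nonempty := by
    have : Nonempty (Fin n) := ⟨⟨0, hn⟩⟩
    exact NormedSpace.sphere_nonempty.2 zero_le_one
  obtain ⟨w, hwS, hmax⟩ := (isCompact_sphere (0 : EuclideanSpace ℝ (Fin n)) 1).exists_isMaxOn hne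
    ((continuous_norm.comp T.continuous).continuousOn)
  have hw1 : ‖w‖ = 1 := by simpa using hwS
  refine ⟨w, hw1, le_antisymm ?_ ?_⟩
  · simpa [hw1, specNorm, T] using T.le_opNorm w
  · refine ContinuousLinearMap.opNorm_le_bound' _ (norm_nonneg _) fun x hx => ?_
    have hxpos : 0 < ‖x‖ := lt_of_le_of_ne (norm_nonneg x) (Ne.symm hx)
    have hu : (‖x‖⁻¹ • x) ∈ Metric.sphere (0 : EuclideanSpace ℝ (Fin n)) 1 := by
      simp [norm_smul, abs_of_pos hxpos, inv_mul_cancel₀ (ne_of_gt hxpos)]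
    have h2 : ‖x‖⁻¹ * ‖T x‖ ≤ ‖T w‖ := by
      simpa [norm_smul, abs_of_pos hxpos] using hmax hu
    calc ‖T x‖ = ‖x‖ * (‖x‖⁻¹ * ‖T x‖) := by field_simp
    _ ≤ ‖x‖ * ‖T w‖ := by nlinarith [norm_nonneg (T x)]
    _ = ‖T w‖ * ‖x‖ := mul_comm _ _

lemma vcls_rank_ker {m n : ℕ} (B : Matrix (Fin m) (Fin n) ℝ) :
    Module.finrank ℝ (LinearMap.ker (Matrix.toEuclideanLin B)) + B.rank = n := by
  have h1 := LinearMap.finrank_range_add_finrank_ker (Matrix.toEuclideanLin B)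
  have h2 : B.rank = Module.finrank ℝ (LinearMap.range (Matrix.toEuclideanLin B)) := by
    rw [Matrix.rank_eq_finrank_range_toLin B (PiLp.basisFun 2 ℝ (Fin m)) (PiLp.basisFun 2 ℝ (Fin n)),
      Matrix.toEuclideanLin_eq_toLin]
  rw [h2]
  simp only [finrank_euclideanSpace, Fintype.card_fin] at h1
  omega

lemma vcls_mulVec_apply {m n : ℕ} (A : Matrix (Fin m) (Fin n) ℝ) (x : EuclideanSpace ℝ (Fin n))
    (i : Fin m) : (Matrix.toEuclideanLin A x) i = ∑ j, A i j * x j := rfl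

set_option maxHeartbeats 2000000 in
/-- Let `V = diag(v₁,…,v_r,0,…,0)` with `v₁ ≥ ⋯ ≥ v_r > 0`, and let `U`
agree with `V` in all entries with row or column index `≤ r`, with the lower-right
`(m−r)×(n−r)` block of `U` of spectral norm at most `v_r`.  Then `V` is a nearest
point to `U` on the rank `≤ r` variety also for the spectral norm:
`‖U − V‖₂ ≤ ‖U − B‖₂` for all `B` of rank at most `r`. -/
theorem voronoi_cell_low_rank_spectral (m n r : ℕ) (hr : 1 ≤ r) (hrm : r ≤ m) (hrn : r ≤ n)
    (v : Fin r → ℝ) (hv : ∀ i j : Fin r, i ≤ j → v j ≤ v i) (hvpos : ∀ i, 0 < v i)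
    (V : Matrix (Fin m) (Fin n) ℝ)
    (hV : ∀ i j, V i j = if h : (i : ℕ) = (j : ℕ) ∧ (i : ℕ) < r then v ⟨i, h.2⟩ else 0)
    (U : Matrix (Fin m) (Fin n) ℝ)
    (hUV : ∀ (i : Fin m) (j : Fin n), ((i : ℕ) < r ∨ (j : ℕ) < r) → U i j = V i j)
    (hU22 : specNorm (Matrix.of fun (i : Fin (m - r)) (j : Fin (n - r)) =>
        U ⟨r + i, by omega⟩ ⟨r + j, by omega⟩) ≤ v ⟨r - 1, by omega⟩) :
    ∀ B : Matrix (Fin m) (Fin n) ℝ, B.rank ≤ r → specNorm (U - V) ≤ specNorm (U - B) := by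
  classical
  intro B hB
  set vl : ℝ := v ⟨r - 1, by omega⟩ with hvl
  have hvl0 : 0 < vl := hvpos _
  have hvge : ∀ i : Fin r, vl ≤ v i := by
    intro i
    exact hv i ⟨r - 1, by omega⟩ (by rw [Fin.le_def]; simp; omega)
  set s : ℝ := specNorm (U - V) with hsdef
  have hs0 : 0 ≤ s := vcls_specNorm_nonneg _
  -- entries of U - V
  have hAij : ∀ (i : Fin m) (j : Fin n),
      (U - V) i j = if r ≤ (i : ℕ) ∧ r ≤ (j : ℕ) then U i j else 0 := by
    intro i j
    by_cases h1 : r ≤ (i : ℕ) ∧ r ≤ (j : ℕ)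
    · have hV0 : V i j = 0 := by rw [hV]; exact dif_neg (by omega)
      simp [Matrix.sub_apply, hV0, h1]
    · have h2 : U i j = V i j := hUV i j (by omega)
      simp [Matrix.sub_apply, h2, h1]
  have hVrow0 : ∀ (i : Fin m), r ≤ (i : ℕ) → ∀ j, V i j = 0 := by
    intro i hi j
    rw [hV]; exact dif_neg (by omega)
  have hUrow : ∀ (i : Fin m) (hi : (i : ℕ) < r) (j : Fin n),
      U i j = if (j : ℕ) = (i : ℕ) then v ⟨i, hi⟩ else 0 := by
    intro i hi j
    rw [hUV i j (Or.inl hi), hV]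
    by_cases hij : (i : ℕ) = (j : ℕ)
    · rw [dif_pos ⟨hij, hi⟩, if_pos hij.symm]
    · rw [dif_neg (by omega), if_neg (by omega)]
  set U22 : Matrix (Fin (m - r)) (Fin (n - r)) ℝ :=
    Matrix.of fun (i : Fin (m - r)) (j : Fin (n - r)) =>
      U ⟨r + i, by omega⟩ ⟨r + j, by omega⟩ with hU22def
  -- (U-V) x coordinates
  have hAx : ∀ (x : EuclideanSpace ℝ (Fin n)) (i : Fin m),
      (Matrix.toEuclideanLin (U - V) x) i =
        if hi : r ≤ (i : ℕ) then
          (Matrix.toEuclideanLin U22 (WithLp.toLp 2 (fun j => x ⟨r + j, by omega⟩ : Fin (n - r) → ℝ))) ⟨(i : ℕ) - r, by omega⟩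
        else 0 := by
    intro x i
    rw [vcls_mulVec_apply]
    by_cases hi : r ≤ (i : ℕ)
    · rw [dif_pos hi, vcls_mulVec_apply,
        vcls_sum_split n r hrn (fun j => (U - V) i j * x j)]
      have h0 : (∑ j : Fin r, (U - V) i (⟨j, by omega⟩ : Fin n) * x ⟨j, by omega⟩) = 0 := by
        apply Finset.sum_eq_zero
        intro j _
        rw [hAij]
        rw [if_neg (by simp)]
        ring
      rw [h0, zero_add]
      apply Finset.sum_congr rfl
      intro j _
      congr 1
      rw [hAij, if_pos ⟨hi, by simp⟩]
      show U i _ = U22 ⟨(i : ℕ) - r, by omega⟩ j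
      rw [hU22def]
      show U i _ = U ⟨r + ((i : ℕ) - r), by omega⟩ ⟨r + j, by omega⟩
      congr 1
      exact Fin.ext (by simp; omega)
    · rw [dif_neg hi]
      apply Finset.sum_eq_zero
      intro j _
      rw [hAij, if_neg (by omega)]
      ring
  -- s ≤ vl
  have hsle : s ≤ vl := by
    apply vcls_specNorm_le _ _ (le_of_lt hvl0)
    intro x
    set y : EuclideanSpace ℝ (Fin (n - r)) := WithLp.toLp 2 (fun j => x ⟨r + j, by omega⟩ : Fin (n - r) → ℝ) with hy
    have hyx : ‖y‖ ≤ ‖x‖ := by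
      apply vcls_le_of_sq_le (norm_nonneg x)
      rw [vcls_sq_norm, vcls_sq_norm, vcls_sum_split n r hrn (fun j => (x j)^2)]
      exact le_add_of_nonneg_left (by positivity)
    have hAxnorm : ‖Matrix.toEuclideanLin (U - V) x‖ = ‖Matrix.toEuclideanLin U22 y‖ := by
      have hsq : ‖Matrix.toEuclideanLin (U - V) x‖^2 = ‖Matrix.toEuclideanLin U22 y‖^2 := by
        rw [vcls_sq_norm, vcls_sq_norm,
          vcls_sum_split m r hrm (fun i => ((Matrix.toEuclideanLin (U - V) x) i)^2)]
        have h0 : (∑ i : Fin r, ((Matrix.toEuclideanLin (U - V) x) (⟨i, by omega⟩ : Fin m))^2) = 0 := by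
          apply Finset.sum_eq_zero
          intro i _
          rw [hAx]
          rw [dif_neg (by simp)]
          ring
        rw [h0, zero_add]
        apply Fintype.sum_equiv (Equiv.refl _)
        intro i
        rw [hAx]
        rw [dif_pos (by simp)]
        exact congrArg (fun idx : Fin (m - r) => (Matrix.toEuclideanLin U22 y idx)^2)
          (Fin.ext (by simp))
      have := norm_nonneg (Matrix.toEuclideanLin (U - V) x)
      have := norm_nonneg (Matrix.toEuclideanLin U22 y)
      nlinarith
    calc ‖Matrix.toEuclideanLin (U - V) x‖ = ‖Matrix.toEuclideanLin U22 y‖ := hAxnorm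
    _ ≤ specNorm U22 * ‖y‖ := vcls_apply_le _ _
    _ ≤ vl * ‖x‖ := by
        apply mul_le_mul hU22 hyx (norm_nonneg y) (le_of_lt hvl0)
  -- trivial case s = 0
  rcases hs0.eq_or_lt with hseq | hspos
  · rw [← hseq]; exact vcls_specNorm_nonneg _
  -- maximizer
  obtain ⟨w, hwn, hwmax⟩ := vcls_exists_max (le_trans hr hrn) (U - V)
  set w1 : EuclideanSpace ℝ (Fin n) := WithLp.toLp 2 (fun j => if r ≤ (j : ℕ) then w j else 0 : Fin n → ℝ) with hw1def
  have hw1A : Matrix.toEuclideanLin (U - V) w1 = Matrix.toEuclideanLin (U - V) w := by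
    apply PiLp.ext
    intro i
    rw [vcls_mulVec_apply, vcls_mulVec_apply]
    apply Finset.sum_congr rfl
    intro j _
    by_cases hj : r ≤ (j : ℕ)
    · have : w1 j = w j := by rw [hw1def]; simp [hj]
      rw [this]
    · rw [hAij, if_neg (by omega)]
      ring
  have hw1n : ‖w1‖ ≤ 1 := by
    rw [← hwn]
    apply vcls_le_of_sq_le (norm_nonneg w)
    rw [vcls_sq_norm, vcls_sq_norm]
    apply Finset.sum_le_sum
    intro j _
    by_cases hj : r ≤ (j : ℕ) <;> simp [hw1def, hj] <;> positivity
  have hw1Av : ‖Matrix.toEuclideanLin (U - V) w1‖ = s := by rw [hw1A, hwmax]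
  have hw1pos : 0 < ‖w1‖ := by
    rcases (norm_nonneg w1).eq_or_lt with h | h
    · exfalso
      have hz : w1 = 0 := norm_eq_zero.1 h.symm
      rw [hz] at hw1Av
      simp at hw1Av
      exact absurd hw1Av.symm (ne_of_gt hspos)
    · exact h
  set w2 : EuclideanSpace ℝ (Fin n) := ‖w1‖⁻¹ • w1 with hw2def
  have hw2n : ‖w2‖ = 1 := by
    rw [hw2def, norm_smul, norm_inv, norm_norm, inv_mul_cancel₀ (ne_of_gt hw1pos)]
  have hw2c0 : ∀ j : Fin n, (j : ℕ) < r → w2 j = 0 := by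
    intro j hj
    show ‖w1‖⁻¹ * w1 j = 0
    have : w1 j = 0 := by rw [hw1def]; simp; omega
    rw [this, mul_zero]
  have hw2A : s ≤ ‖Matrix.toEuclideanLin (U - V) w2‖ := by
    rw [hw2def, map_smul, norm_smul, norm_inv, norm_norm, hw1Av]
    rw [← div_eq_inv_mul, le_div_iff₀ hw1pos]
    nlinarith
  -- orthonormal family
  set f : (Fin r ⊕ Unit) → EuclideanSpace ℝ (Fin n) :=
    Sum.elim (fun i => EuclideanSpace.single (⟨i, by omega⟩ : Fin n) 1) (fun _ => w2) with hfdef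
  have hforth : Orthonormal ℝ f := by
    rw [orthonormal_iff_ite]
    rintro (i | i) (j | j)
    · rw [hfdef]
      simp only [Sum.elim_inl, EuclideanSpace.inner_single_left, EuclideanSpace.single_apply]
      by_cases hij : i = j
      · subst hij; simp
      · rw [if_neg (by simp [Fin.ext_iff]; omega), if_neg (by simp [hij])]
        simp
    · rw [hfdef]
      simp only [Sum.elim_inl, Sum.elim_inr, EuclideanSpace.inner_single_left]
      rw [hw2c0 _ (by simp), if_neg (by simp)]
      simp
    · rw [hfdef]
      simp only [Sum.elim_inl, Sum.elim_inr, EuclideanSpace.inner_single_right]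
      rw [hw2c0 _ (by simp), if_neg (by simp)]
      simp
    · rw [hfdef]
      simp only [Sum.elim_inr]
      rw [if_pos (by simp), real_inner_self_eq_norm_sq, hw2n]
      simp
  -- dimension count
  have hWrank : Module.finrank ℝ (Submodule.span ℝ (Set.range f)) = r + 1 := by
    rw [finrank_span_eq_card hforth.linearIndependent]
    simp
  set K := LinearMap.ker (Matrix.toEuclideanLin B) with hKdef
  have hKrank : n ≤ Module.finrank ℝ K + r := by
    have h1 := vcls_rank_ker B
    rw [hKdef]
    omega
  have hinf : 0 < Module.finrank ℝ ↥(K ⊓ Submodule.span ℝ (Set.range f)) := by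
    have h1 := Submodule.finrank_sup_add_finrank_inf_eq K (Submodule.span ℝ (Set.range f))
    have h2 : Module.finrank ℝ ↥(K ⊔ Submodule.span ℝ (Set.range f)) ≤ n := by
      have h3 := Submodule.finrank_le (K ⊔ Submodule.span ℝ (Set.range f))
      simpa using h3
    omega
  obtain ⟨x, hxmem, hx0⟩ := Submodule.exists_mem_ne_zero_of_ne_bot
    (p := K ⊓ Submodule.span ℝ (Set.range f))
    (by intro hbot; rw [hbot] at hinf; simp at hinf)
  have hxK : x ∈ K := hxmem.1
  have hxW : x ∈ Submodule.span ℝ (Set.range f) := hxmem.2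
  obtain ⟨c, hc⟩ := (Submodule.mem_span_range_iff_exists_fun ℝ).1 hxW
  set t : ℝ := c (Sum.inr ()) with htdef
  -- coordinates of x
  have hxcoord : ∀ j : Fin n,
      x j = (if hj : (j : ℕ) < r then c (Sum.inl ⟨j, hj⟩) else 0) + t * w2 j := by
    intro j
    rw [← hc, WithLp.ofLp_sum, Finset.sum_apply j univ _, Fintype.sum_sum_type]
    have htail : (∑ u : Unit, (c (Sum.inr u) • f (Sum.inr u)) j) = t * w2 j := by
      rw [Fintype.sum_unique]
      rw [hfdef]
      show c (Sum.inr ()) • w2 j = t * w2 j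
      rw [htdef]
      rfl
    have hhead : (∑ i : Fin r, (c (Sum.inl i) • f (Sum.inl i)) j)
        = (if hj : (j : ℕ) < r then c (Sum.inl ⟨j, hj⟩) else 0) := by
      by_cases hj : (j : ℕ) < r
      · rw [dif_pos hj, Finset.sum_eq_single (⟨(j : ℕ), hj⟩ : Fin r)]
        · rw [hfdef]
          show c (Sum.inl ⟨↑j, hj⟩) • (EuclideanSpace.single (⟨(j:ℕ), by omega⟩ : Fin n) (1:ℝ)) j
              = c (Sum.inl ⟨↑j, hj⟩)
          rw [EuclideanSpace.single_apply, if_pos (Fin.ext (by simp))]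
          show c (Sum.inl ⟨↑j, hj⟩) * 1 = c (Sum.inl ⟨↑j, hj⟩)
          ring
        · intro i _ hi
          rw [hfdef]
          simp only [Sum.elim_inl, PiLp.smul_apply, EuclideanSpace.single_apply,
            smul_eq_mul]
          rw [if_neg (by simp [Fin.ext_iff]; intro hh; exact absurd (Fin.ext (by simp [hh])) hi)]
          ring
        · intro h; exact absurd (Finset.mem_univ _) h
      · rw [dif_neg hj]
        apply Finset.sum_eq_zero
        intro i _
        rw [hfdef]
        simp only [Sum.elim_inl, PiLp.smul_apply, EuclideanSpace.single_apply,
          smul_eq_mul]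
        rw [if_neg (by simp [Fin.ext_iff]; omega)]
        ring
    rw [htail, hhead]
  -- row evaluations of U x
  have hUx1 : ∀ (i : Fin m) (hi : (i : ℕ) < r),
      (Matrix.toEuclideanLin U x) i = v ⟨i, hi⟩ * x ⟨i, by omega⟩ := by
    intro i hi
    rw [vcls_mulVec_apply]
    calc (∑ j, U i j * x j)
        = ∑ j : Fin n, (if j = (⟨(i : ℕ), by omega⟩ : Fin n) then v ⟨i, hi⟩ * x j else 0) := by
          apply Finset.sum_congr rfl
          intro j _
          rw [hUrow i hi]
          by_cases hj : j = (⟨(i : ℕ), by omega⟩ : Fin n)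
          · rw [if_pos hj, if_pos (by rw [hj])]
          · rw [if_neg hj, if_neg (by simp [Fin.ext_iff] at hj ⊢; omega), zero_mul]
    _ = v ⟨i, hi⟩ * x ⟨i, by omega⟩ := by
          exact Fintype.sum_ite_eq' (⟨(i : ℕ), by omega⟩ : Fin n) (fun j => v ⟨i, hi⟩ * x j)
  have hUx2 : ∀ (i : Fin m), r ≤ (i : ℕ) →
      (Matrix.toEuclideanLin U x) i = t * (Matrix.toEuclideanLin (U - V) w2) i := by
    intro i hi
    rw [vcls_mulVec_apply, vcls_mulVec_apply, Finset.mul_sum]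
    apply Finset.sum_congr rfl
    intro j _
    by_cases hj : (j : ℕ) < r
    · rw [hUV i j (Or.inr hj), hVrow0 i hi j, hAij, if_neg (by omega)]
      ring
    · have hx : x j = t * w2 j := by rw [hxcoord j, dif_neg hj, zero_add]
      rw [hx, hAij, if_pos ⟨hi, by omega⟩]
      ring
  have hAw2 : ∀ i : Fin m, (i : ℕ) < r → (Matrix.toEuclideanLin (U - V) w2) i = 0 := by
    intro i hi
    rw [hAx, dif_neg (by omega)]
  -- norm identities
  set S : ℝ := ∑ i : Fin r, (x (⟨i, by omega⟩ : Fin n))^2 with hSdef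
  have hw2tail : (∑ j : Fin (n - r), (w2 (⟨r + j, by omega⟩ : Fin n))^2) = 1 := by
    have h1 : ‖w2‖^2 = 1 := by rw [hw2n]; norm_num
    rw [vcls_sq_norm, vcls_sum_split n r hrn (fun j => (w2 j)^2)] at h1
    have h0 : (∑ j : Fin r, (w2 (⟨j, by omega⟩ : Fin n))^2) = 0 := by
      apply Finset.sum_eq_zero
      intro j _
      rw [hw2c0 _ (by simp)]
      ring
    rw [h0, zero_add] at h1
    exact h1
  have hxnorm : ‖x‖^2 = S + t^2 := by
    rw [vcls_sq_norm, vcls_sum_split n r hrn (fun j => (x j)^2)]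
    congr 1
    have h1 : ∀ j : Fin (n - r), (x (⟨r + j, by omega⟩ : Fin n))^2
        = t^2 * (w2 (⟨r + j, by omega⟩ : Fin n))^2 := by
      intro j
      rw [hxcoord, dif_neg (by simp), zero_add]
      ring
    calc (∑ j : Fin (n - r), (x (⟨r + j, by omega⟩ : Fin n))^2)
        = ∑ j : Fin (n - r), t^2 * (w2 (⟨r + j, by omega⟩ : Fin n))^2 :=
          Finset.sum_congr rfl fun j _ => h1 j
    _ = t^2 * ∑ j : Fin (n - r), (w2 (⟨r + j, by omega⟩ : Fin n))^2 := by
          rw [Finset.mul_sum]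
    _ = t^2 := by rw [hw2tail]; ring
  have hUxnorm : (s * ‖x‖)^2 ≤ ‖Matrix.toEuclideanLin U x‖^2 := by
    rw [vcls_sq_norm, vcls_sum_split m r hrm (fun i => ((Matrix.toEuclideanLin U x) i)^2)]
    have hhead : s^2 * S ≤ ∑ i : Fin r, ((Matrix.toEuclideanLin U x) (⟨i, by omega⟩ : Fin m))^2 := by
      rw [hSdef, Finset.mul_sum]
      apply Finset.sum_le_sum
      intro i _
      rw [hUx1 ⟨i, by omega⟩ (by simp)]
      have h1 : s ≤ v ⟨i, by simp⟩ := le_trans hsle (hvge _)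
      have h2 : (0:ℝ) ≤ (x (⟨(i:ℕ), by omega⟩ : Fin n))^2 := sq_nonneg _
      have h3 : s^2 ≤ (v ⟨i, by simp⟩)^2 := by nlinarith
      calc s^2 * (x (⟨(i:ℕ), by omega⟩ : Fin n))^2
          ≤ (v ⟨i, by simp⟩)^2 * (x (⟨(i:ℕ), by omega⟩ : Fin n))^2 := by nlinarith
      _ = (v ⟨(i:ℕ), by simp⟩ * x (⟨(i:ℕ), by omega⟩ : Fin n))^2 := by ring
    have htail : s^2 * t^2 ≤ ∑ i : Fin (m - r),
        ((Matrix.toEuclideanLin U x) (⟨r + i, by omega⟩ : Fin m))^2 := by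
      have h2 : ∀ i : Fin (m - r),
          ((Matrix.toEuclideanLin U x) (⟨r + i, by omega⟩ : Fin m))^2
          = t^2 * ((Matrix.toEuclideanLin (U - V) w2) (⟨r + i, by omega⟩ : Fin m))^2 := by
        intro i
        rw [hUx2 _ (by simp)]
        ring
      have h3 : ‖Matrix.toEuclideanLin (U - V) w2‖^2
          = ∑ i : Fin (m - r), ((Matrix.toEuclideanLin (U - V) w2) (⟨r + i, by omega⟩ : Fin m))^2 := by
        rw [vcls_sq_norm, vcls_sum_split m r hrm (fun i => ((Matrix.toEuclideanLin (U - V) w2) i)^2)]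
        have h0 : (∑ i : Fin r, ((Matrix.toEuclideanLin (U - V) w2) (⟨i, by omega⟩ : Fin m))^2) = 0 := by
          apply Finset.sum_eq_zero
          intro i _
          rw [hAw2 _ (by simp)]
          ring
        rw [h0, zero_add]
      calc s^2 * t^2 ≤ t^2 * ‖Matrix.toEuclideanLin (U - V) w2‖^2 := by
            have hsq : s^2 ≤ ‖Matrix.toEuclideanLin (U - V) w2‖^2 := by nlinarith [hw2A, hs0]
            nlinarith [mul_nonneg (sub_nonneg.2 hsq) (sq_nonneg t)]
      _ = ∑ i : Fin (m - r), ((Matrix.toEuclideanLin U x) (⟨r + i, by omega⟩ : Fin m))^2 := by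
            rw [h3, Finset.mul_sum]
            exact Finset.sum_congr rfl fun i _ => (h2 i).symm
    calc (s * ‖x‖)^2 = s^2 * S + s^2 * t^2 := by rw [mul_pow, hxnorm]; ring
    _ ≤ _ := add_le_add hhead htail
  -- conclude
  have hxpos : 0 < ‖x‖ := norm_pos_iff.2 hx0
  have hUB : Matrix.toEuclideanLin (U - B) x = Matrix.toEuclideanLin U x := by
    have hk : Matrix.toEuclideanLin B x = 0 := LinearMap.mem_ker.1 hxK
    have hsub : Matrix.toEuclideanLin (U - B) = Matrix.toEuclideanLin U - Matrix.toEuclideanLin B :=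
      map_sub _ _ _
    rw [hsub, LinearMap.sub_apply, hk, sub_zero]
  have hfin : s * ‖x‖ ≤ ‖Matrix.toEuclideanLin (U - B) x‖ := by
    rw [hUB]
    exact vcls_le_of_sq_le (norm_nonneg _) hUxnorm
  have hfin2 : s * ‖x‖ ≤ specNorm (U - B) * ‖x‖ := le_trans hfin (vcls_apply_le (U - B) x)
  exact le_of_mul_le_mul_right hfin2 hxpos
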